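/- arXiv:2305.13922 — 2 statements merged into one kernel-verified Lean document; each statement's English description precedes it below -/
import Mathlib

section
/- Let C, N₀, τ > 0 with 16·C·τ·N₀ < 1, and let E : [0,τ] → ℝ be continuous and nonnegative with E(0) ≤ N₀ and E(t) ≤ N₀ + 4C·t·E(t)² for all t ∈ [0,τ]. If moreover τ ≤ 1/(32·C·N₀), then E(t) < 4N₀ for all t ∈ [0,τ]. -/
/-!
By the intermediate value theorem, a continuous function on an interval that starts below `4N₀`
and never takes the value `4N₀` stays below `4N₀`. The value `4N₀` is excluded by the
inequality itself: at such a time `t`, `4N₀ ≤ N₀ + 64 C t N₀² ≤ N₀ + 2N₀` because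
`32 C t N₀ ≤ 1`.
-/

open Set

theorem IsPreconnected.forall_lt_of_forall_ne {X α : Type*} [TopologicalSpace X]
    [LinearOrder α] [TopologicalSpace α] [OrderClosedTopology α] {s : Set X}
    (hs : IsPreconnected s) {f : X → α} (hf : ContinuousOn f s) {x₀ : X} (hx₀ : x₀ ∈ s)
    {M : α} (hlt : f x₀ < M) (hne : ∀ x ∈ s, f x ≠ M) : ∀ x ∈ s, f x < M := by
  intro x hx
  by_contra! hle
  obtain ⟨y, hy, hfy⟩ := hs.intermediate_value hx₀ hx hf ⟨hlt.le, hle⟩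
  exact hne y hy hfy

theorem four_mul_ne_of_le_add_mul_sq {C N t y : ℝ} (hN : 0 < N)
    (htC : t * (32 * C * N) ≤ 1) (hy : y ≤ N + 4 * C * t * y ^ 2) : y ≠ 4 * N := by
  rintro rfl
  nlinarith

theorem bootstrap_energy_bound_general (C N₀ τ : ℝ) (hC : 0 < C) (hN : 0 < N₀)
    (hτ2 : τ ≤ 1 / (32 * C * N₀))
    (E : ℝ → ℝ) (hcont : ContinuousOn E (Set.Icc 0 τ))
    (h0 : E 0 ≤ N₀)
    (hineq : ∀ t ∈ Set.Icc 0 τ, E t ≤ N₀ + 4 * C * t * (E t) ^ 2) :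
    ∀ t ∈ Set.Icc 0 τ, E t < 4 * N₀ := by
  intro t ht
  have hτ : 0 ≤ τ := ht.1.trans ht.2
  refine isPreconnected_Icc.forall_lt_of_forall_ne hcont (left_mem_Icc.2 hτ)
    (by linarith) (fun s hs ↦ ?_) t ht
  have hsC : s * (32 * C * N₀) ≤ 1 :=
    (le_div_iff₀ (by positivity)).1 (hs.2.trans hτ2)
  exact four_mul_ne_of_le_add_mul_sq hN hsC (hineq s hs)

/-- Continuity/bootstrap argument: if `E ≥ 0` is continuous on `[0,τ]`, `E(0) ≤ N₀`,
`E(t) ≤ N₀ + 4Ct·E(t)²` on `[0,τ]`, `16CτN₀ < 1` and `τ ≤ 1/(32CN₀)`, then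
`E(t) < 4N₀` on `[0,τ]`. -/
theorem bootstrap_energy_bound (C N₀ τ : ℝ) (hC : 0 < C) (hN : 0 < N₀) (hτ : 0 < τ)
    (hsmall : 16 * C * τ * N₀ < 1) (hτ2 : τ ≤ 1 / (32 * C * N₀))
    (E : ℝ → ℝ) (hcont : ContinuousOn E (Set.Icc 0 τ))
    (hnn : ∀ t ∈ Set.Icc 0 τ, 0 ≤ E t) (h0 : E 0 ≤ N₀)
    (hineq : ∀ t ∈ Set.Icc 0 τ, E t ≤ N₀ + 4 * C * t * (E t) ^ 2) :
    ∀ t ∈ Set.Icc 0 τ, E t < 4 * N₀ :=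
  bootstrap_energy_bound_general C N₀ τ hC hN hτ2 E hcont h0 hineq
end

section
/- Let C > 0, T > 0, β ∈ L¹([0,T]) nonnegative, and let y : [0,T] → [0,∞) be differentiable satisfying y′(t) ≤ C(1 + β(t)[1 + log(1 + y(t))])·y(t). Then for all t ∈ [0,T], 1 + y(t) ≤ [(1 + y(0))·exp(1 + C·t)]^{exp(C·∫₀ᵗ β(s) ds)}. -/
/-!
With `w = 1 + log (1 + y)` the hypothesis gives `w' ≤ C + C β w` (as `y ≤ 1 + y`), and the claim
follows from Grönwall's bound `w t ≤ (w 0 + C t) exp (C ∫₀ᵗ β)`. Since `β` is only integrable, its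
primitive `K` is differentiable only almost everywhere, so the integrating factor `exp (-C K)` is
handled with absolutely continuous functions: integrating the differential inequality gives
`w s ≤ c + ∫₀ˢ C β w` with `c = w 0 + C t`, and `(c + ∫₀ˢ C β w) exp (-C K s)` is absolutely
continuous with a.e. nonpositive derivative, hence nonincreasing.
-/

open MeasureTheory Set Filter Real

theorem LipschitzOnWith.comp_absolutelyContinuousOnInterval {X Y : Type*} [PseudoMetricSpace X]
    [PseudoMetricSpace Y] {g : X → Y} {f : ℝ → X} {K : NNReal} {s : Set X} {a b : ℝ}
    (hg : LipschitzOnWith K g s) (hfs : MapsTo f (uIcc a b) s)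
    (hf : AbsolutelyContinuousOnInterval f a b) :
    AbsolutelyContinuousOnInterval (g ∘ f) a b := by
  unfold AbsolutelyContinuousOnInterval at hf ⊢
  refine squeeze_zero' (Eventually.of_forall fun _ ↦ Finset.sum_nonneg fun _ _ ↦ dist_nonneg)
    ?_ (by simpa using hf.const_mul (K : ℝ))
  filter_upwards [mem_inf_of_right (mem_principal_self _)] with E hE
  rw [Finset.mul_sum]
  exact Finset.sum_le_sum fun i hi ↦
    hg.dist_le_mul _ (hfs (hE.1 i hi).1) _ (hfs (hE.1 i hi).2)

theorem LocallyLipschitz.comp_absolutelyContinuousOnInterval {F Y : Type*}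
    [SeminormedAddCommGroup F] [ProperSpace F] [PseudoMetricSpace Y] {g : F → Y} {f : ℝ → F}
    {a b : ℝ} (hg : LocallyLipschitz g) (hf : AbsolutelyContinuousOnInterval f a b) :
    AbsolutelyContinuousOnInterval (g ∘ f) a b := by
  obtain ⟨M, hM⟩ := hf.exists_bound
  obtain ⟨K, hK⟩ := hg.locallyLipschitzOn.exists_lipschitzOnWith_of_compact
    (isCompact_closedBall (0 : F) M)
  exact hK.comp_absolutelyContinuousOnInterval (fun x hx ↦ mem_closedBall_zero_iff.2 (hM x hx)) hf

theorem le_mul_exp_integral_of_le_add_integral {k w : ℝ → ℝ} {a b c : ℝ} (hab : a ≤ b)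
    (hk : IntervalIntegrable k volume a b) (hk_nonneg : ∀ s ∈ Icc a b, 0 ≤ k s)
    (hw : ContinuousOn w (Icc a b))
    (h : ∀ s ∈ Icc a b, w s ≤ c + ∫ r in a..s, k r * w r) :
    w b ≤ c * exp (∫ r in a..b, k r) := by
  rw [← uIcc_of_le hab] at hk_nonneg hw h
  set U : ℝ → ℝ := fun s ↦ ∫ r in a..s, k r * w r
  set K : ℝ → ℝ := fun s ↦ ∫ r in a..s, k r
  have hkw : IntervalIntegrable (fun r ↦ k r * w r) volume a b := hk.mul_continuousOn hw
  have hU : AbsolutelyContinuousOnInterval U a b :=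
    hkw.absolutelyContinuousOnInterval_intervalIntegral left_mem_uIcc
  have hE : AbsolutelyContinuousOnInterval (fun s ↦ exp (-K s)) a b :=
    (contDiff_exp.locallyLipschitz.comp_absolutelyContinuousOnInterval
      (hk.absolutelyContinuousOnInterval_intervalIntegral left_mem_uIcc).neg :)
  have hv : AbsolutelyContinuousOnInterval (fun s ↦ (c + U s) * exp (-K s)) a b :=
    (contDiffOn_const.absolutelyContinuousOnInterval.fun_add hU).fun_mul hE
  -- the derivative is `k (w - c - U) e^{-K}`, and `w ≤ c + U` by hypothesis
  have hderiv : ∀ᵐ s, s ∈ uIoc a b → deriv (fun s ↦ (c + U s) * exp (-K s)) s ≤ 0 := by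
    filter_upwards [hkw.ae_hasDerivAt_integral, hk.ae_hasDerivAt_integral] with s hU' hK' hs
    have hs : s ∈ uIcc a b := uIoc_subset_uIcc hs
    have hv' : HasDerivAt (fun s ↦ (c + U s) * exp (-K s))
        (k s * w s * exp (-K s) + (c + U s) * (exp (-K s) * -k s)) s :=
      ((hU' hs a left_mem_uIcc).const_add c).mul (hK' hs a left_mem_uIcc).neg.exp
    rw [hv'.deriv]
    have := mul_nonneg (hk_nonneg s hs) (exp_pos (-K s)).le
    nlinarith [h s hs]
  have hdecr : (c + U b) * exp (-K b) ≤ c := by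
    have hint : ∫ s in a..b, deriv (fun s ↦ (c + U s) * exp (-K s)) s ≤ 0 := by
      rw [intervalIntegral.integral_of_le hab]
      refine integral_nonpos_of_ae ((ae_restrict_iff' measurableSet_Ioc).2 ?_)
      simpa only [uIoc_of_le hab, Pi.zero_apply] using hderiv
    simpa [hv.integral_deriv_eq_sub, U, K] using hint
  calc w b ≤ c + U b := h b right_mem_uIcc
    _ = (c + U b) * exp (-K b) * exp (K b) := by rw [mul_assoc, ← exp_add]; simp
    _ ≤ c * exp (K b) := mul_le_mul_of_nonneg_right hdecr (exp_pos (K b)).le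

theorem le_mul_exp_integral_of_hasDerivAt_le {k w w' : ℝ → ℝ} {a b c : ℝ} (hab : a ≤ b)
    (hc : 0 ≤ c) (hk : IntegrableOn k (Icc a b)) (hk_nonneg : ∀ s ∈ Icc a b, 0 ≤ k s)
    (hw : ContinuousOn w (Icc a b)) (hw' : ∀ s ∈ Ioo a b, HasDerivAt w (w' s) s)
    (h : ∀ s ∈ Ioo a b, w' s ≤ c + k s * w s) :
    w b ≤ (w a + c * (b - a)) * exp (∫ s in a..b, k s) := by
  refine le_mul_exp_integral_of_le_add_integral hab
    ((intervalIntegrable_iff_integrableOn_Icc_of_le hab).2 hk) hk_nonneg hw fun s hs ↦ ?_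
  have hsub : Icc a s ⊆ Icc a b := Icc_subset_Icc_right hs.2
  have hkw : IntegrableOn (fun r ↦ k r * w r) (Icc a s) :=
    (hk.mono_set hsub).mul_continuousOn (hw.mono hsub) isCompact_Icc
  have hint := intervalIntegral.sub_le_integral_of_hasDeriv_right_of_le (φ := fun r ↦ c + k r * w r) hs.1
    (hw.mono hsub) (fun r hr ↦ (hw' r (Ioo_subset_Ioo_right hs.2 hr)).hasDerivWithinAt)
    ((integrableOn_const measure_Icc_lt_top.ne).add hkw)
    (fun r hr ↦ h r (Ioo_subset_Ioo_right hs.2 hr))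
  rw [intervalIntegral.integral_add intervalIntegrable_const
    ((intervalIntegrable_iff_integrableOn_Icc_of_le hs.1).2 hkw),
    intervalIntegral.integral_const, smul_eq_mul] at hint
  nlinarith [hs.2]

theorem div_one_add_le_of_le_mul_log_one_add {y y' C β : ℝ} (hC : 0 ≤ C) (hβ : 0 ≤ β)
    (hy : 0 ≤ y) (h : y' ≤ C * (1 + β * (1 + log (1 + y))) * y) :
    y' / (1 + y) ≤ C + C * β * (1 + log (1 + y)) := by
  have hlog : 0 ≤ log (1 + y) := log_nonneg (by linarith)
  rw [div_le_iff₀ (by linarith)]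
  have : 0 ≤ C * (1 + β * (1 + log (1 + y))) := by positivity
  nlinarith

theorem log_gronwall_general (C T : ℝ) (hC : 0 < C) (β : ℝ → ℝ)
    (hβnn : ∀ t ∈ Set.Icc 0 T, 0 ≤ β t)
    (hβint : IntegrableOn β (Set.Icc 0 T))
    (y y' : ℝ → ℝ)
    (hynn : ∀ t ∈ Set.Icc 0 T, 0 ≤ y t)
    (hd : ∀ t ∈ Set.Icc 0 T, HasDerivAt y (y' t) t)
    (hineq : ∀ t ∈ Set.Icc 0 T,
      y' t ≤ C * (1 + β t * (1 + Real.log (1 + y t))) * y t) :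
    ∀ t ∈ Set.Icc 0 T,
      1 + y t ≤ ((1 + y 0) * Real.exp (1 + C * t)) ^
        Real.exp (C * ∫ s in (0 : ℝ)..t, β s) := by
  intro t ht
  have hsub : Icc 0 t ⊆ Icc 0 T := Icc_subset_Icc_right ht.2
  have hpos : ∀ s ∈ Icc 0 T, 0 < 1 + y s := fun s hs ↦ by linarith [hynn s hs]
  have hw : ∀ s ∈ Icc 0 T, HasDerivAt (fun s ↦ 1 + log (1 + y s)) (y' s / (1 + y s)) s :=
    fun s hs ↦ (((hd s hs).const_add 1).log (hpos s hs).ne').const_add 1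
  have hbound := le_mul_exp_integral_of_hasDerivAt_le ht.1 hC.le
    ((hβint.mono_set hsub).const_mul C) (fun s hs ↦ mul_nonneg hC.le (hβnn s (hsub hs)))
    (fun s hs ↦ (hw s (hsub hs)).continuousAt.continuousWithinAt)
    (fun s hs ↦ hw s (hsub (Ioo_subset_Icc_self hs)))
    (fun s hs ↦ have hs := hsub (Ioo_subset_Icc_self hs)
      div_one_add_le_of_le_mul_log_one_add hC.le (hβnn s hs) (hynn s hs) (hineq s hs))
  rw [intervalIntegral.integral_const_mul, sub_zero] at hbound
  have h0 : 0 ≤ y 0 := hynn 0 ⟨le_rfl, ht.1.trans ht.2⟩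
  rw [rpow_def_of_pos (by positivity), log_mul (by linarith) (exp_pos _).ne', log_exp,
    ← exp_log (hpos t ht)]
  exact exp_le_exp.2 (by linarith)

/-- Logarithmic Grönwall lemma: if `y ≥ 0` is differentiable on `[0,T]` with
`y' ≤ C(1 + β(t)[1 + log(1+y)])·y` for a nonnegative `β ∈ L¹([0,T])`, then
`1 + y(t) ≤ [(1+y(0))·exp(1+Ct)]^{exp(C∫₀ᵗ β)}`. -/
theorem log_gronwall (C T : ℝ) (hC : 0 < C) (hT : 0 < T) (β : ℝ → ℝ)
    (hβnn : ∀ t ∈ Set.Icc 0 T, 0 ≤ β t)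
    (hβint : IntegrableOn β (Set.Icc 0 T))
    (y y' : ℝ → ℝ)
    (hynn : ∀ t ∈ Set.Icc 0 T, 0 ≤ y t)
    (hd : ∀ t ∈ Set.Icc 0 T, HasDerivAt y (y' t) t)
    (hineq : ∀ t ∈ Set.Icc 0 T,
      y' t ≤ C * (1 + β t * (1 + Real.log (1 + y t))) * y t) :
    ∀ t ∈ Set.Icc 0 T,
      1 + y t ≤ ((1 + y 0) * Real.exp (1 + C * t)) ^
        Real.exp (C * ∫ s in (0 : ℝ)..t, β s) :=
  log_gronwall_general C T hC β hβnn hβint y y' hynn hd hineq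
end
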